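/- arXiv:1712.02452 — 2 statements merged into one kernel-verified Lean document; each statement's English description precedes it below -/
import Mathlib

section
/- Let n ≥ 3 and let C be a reducible relative interaction matrix whose digraph G(C) has exactly the globally reachable nodes {1, …, r} with 3 ≤ r ≤ n, and suppose the subgraph induced by these nodes has star topology with center node 1 (C_{j1} = 1 for 2 ≤ j ≤ r and C_{1j} > 0 for 2 ≤ j ≤ r). Then the only fixed points of F in Δⁿ are the vertices {e_1, …, e_n}, and for every initial condition x(0) ∈ Δⁿ \ {e_1, …, e_n}, the iterates x(t+1) = F(x(t)) converge asymptotically to e_1. -/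
/-- The simplex Δⁿ = {x ∈ ℝⁿ : xᵢ ≥ 0, ∑ᵢ xᵢ = 1}. -/
def simplex (n : ℕ) : Set (Fin n → ℝ) :=
  {x | (∀ i, 0 ≤ x i) ∧ ∑ i, x i = 1}

/-- The i-th vertex (standard basis vector) of the simplex. -/
def vertex (n : ℕ) (i : Fin n) : Fin n → ℝ := fun j => if j = i then 1 else 0

/-- A relative interaction matrix: nonnegative, row-stochastic, zero diagonal. -/
def IsRIM {n : ℕ} (C : Matrix (Fin n) (Fin n) ℝ) : Prop :=
  (∀ i j, 0 ≤ C i j) ∧ (∀ i, ∑ j, C i j = 1) ∧ (∀ i, C i i = 0)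

/-- The single-timescale DeGroot–Friedkin map F(x) = Cᵀ(x − x²) + x². -/
noncomputable def DF {n : ℕ} (C : Matrix (Fin n) (Fin n) ℝ) (x : Fin n → ℝ) : Fin n → ℝ :=
  fun i => ∑ j, C j i * (x j - (x j) ^ 2) + (x i) ^ 2

/-- A nonnegative matrix is irreducible if for all i ≠ j some power has positive (i,j) entry. -/
def Irred {n : ℕ} (C : Matrix (Fin n) (Fin n) ℝ) : Prop :=
  ∀ i j : Fin n, i ≠ j → ∃ k, 1 ≤ k ∧ 0 < (C ^ k) i j

/-- Node i is globally reachable in G(C): every other node reaches i. -/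
def GloballyReachable {n : ℕ} (C : Matrix (Fin n) (Fin n) ℝ) (i : Fin n) : Prop :=
  ∀ j, j ≠ i → ∃ k, 1 ≤ k ∧ 0 < (C ^ k) j i

/-!
Write `S` for the nodes that are not globally reachable and `y = x - x²`. No edge leaves the
star `{c} ∪ L`, so the mass on `S` never increases. On an invariant set where it is constant, the
nodes of `S` with `y_j > 0` only feed nodes of the same kind, so they never reach the centre;
hence there are none. Applied to the ω-limit set, this shows that the mass on `S` tends to `0`
along every orbit that does not start at a vertex.

When `S` carries no mass, the centre coordinate is non-decreasing, and it increases strictly one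
step after `0 < x_c < 1`, because the centre then feeds every leaf. Once the mass on `S` is below
`1/16`, the centre coordinate cannot fall below `min x_c (1/4)`, so along an orbit it stays bounded
away from `0`. The ω-limit set is invariant in both directions, hence at a point of it where the
centre coordinate is minimal, that coordinate must be `1`. A fixed point is an invariant set by
itself, and the same two arguments show it is a vertex.
-/

open Filter Topology Finset

theorem Matrix.pow_apply_eq_zero_of_closed {ι R : Type*} [Fintype ι] [DecidableEq ι]
    [Semiring R] {C : Matrix ι ι R} {P : ι → Prop} (hP : ∀ j l, P j → C j l ≠ 0 → P l) :
    ∀ k j i, P j → ¬ P i → (C ^ k) j i = 0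
  | 0, j, i, hj, hi => Matrix.one_apply_ne fun h => hi (h ▸ hj)
  | k + 1, j, i, hj, hi => by
    rw [pow_succ', Matrix.mul_apply]
    refine sum_eq_zero fun l _ => ?_
    by_cases hjl : C j l = 0
    · rw [hjl, zero_mul]
    · rw [pow_apply_eq_zero_of_closed hP k l i (hP j l hj hjl) hi, mul_zero]

lemma GloballyReachable.of_apply_pos {n : ℕ} {C : Matrix (Fin n) (Fin n) ℝ}
    (hC : ∀ i j, 0 ≤ C i j) {c i : Fin n} (hc : GloballyReachable C c) (hci : 0 < C c i) :
    GloballyReachable C i := by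
  intro j hji
  by_cases hjc : j = c
  · exact ⟨1, le_rfl, by rwa [pow_one, hjc]⟩
  obtain ⟨k, -, hk⟩ := hc j hjc
  refine ⟨k + 1, by omega, ?_⟩
  rw [pow_succ, Matrix.mul_apply]
  exact (mul_pos hk hci).trans_le <| single_le_sum (f := fun l => (C ^ k) j l * C l i)
    (fun l _ => mul_nonneg (Matrix.pow_apply_nonneg hC k j l) (hC l i)) (mem_univ c)

lemma two_mul_le_sq_sum_sub_sum_sq {ι : Type*} [DecidableEq ι] {A : Finset ι} {f : ι → ℝ}
    (hf : ∀ i ∈ A, 0 ≤ f i) {a b : ι} (ha : a ∈ A) (hb : b ∈ A) (hab : a ≠ b) :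
    2 * (f a * f b) ≤ (∑ i ∈ A, f i) ^ 2 - ∑ i ∈ A, f i ^ 2 := by
  rw [← add_sum_erase A f ha, ← add_sum_erase A (f · ^ 2) ha]
  have hrest := sum_sq_le_sq_sum_of_nonneg (s := A.erase a) fun i hi => hf i (mem_of_mem_erase hi)
  have hb' : f b ≤ ∑ i ∈ A.erase a, f i :=
    single_le_sum (fun i hi => hf i (mem_of_mem_erase hi)) (mem_erase.2 ⟨hab.symm, hb⟩)
  nlinarith [hf a ha]

section Orbit

variable {X : Type*} [TopologicalSpace X] {F : X → X} {x : ℕ → X} {w : X}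

lemma MapClusterPt.apply_of_orbit (hF : Continuous F) (hx : ∀ t, x (t + 1) = F (x t))
    (hw : MapClusterPt w atTop x) : MapClusterPt (F w) atTop x := by
  have h : MapClusterPt (F w) atTop (F ∘ x) := hw.tendsto_comp (hF.tendsto w)
  have hshift : F ∘ x = x ∘ (· + 1) := funext fun t => (hx t).symm
  rwa [hshift, mapClusterPt_comp, map_add_atTop_eq_nat] at h

lemma MapClusterPt.exists_apply_eq_of_orbit [T2Space X] {K : Set X} (hK : IsCompact K)
    (hxK : ∀ t, x t ∈ K) (hF : Continuous F) (hx : ∀ t, x (t + 1) = F (x t))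
    (hw : MapClusterPt w atTop x) : ∃ u, MapClusterPt u atTop x ∧ F u = w := by
  have hshift : x ∘ (· + 1) = F ∘ x := funext hx
  rw [← map_add_atTop_eq_nat 1, ← mapClusterPt_comp, hshift, mapClusterPt_iff_ultrafilter] at hw
  obtain ⟨U, hU, hFx⟩ := hw
  obtain ⟨u, -, hu⟩ := hK.ultrafilter_le_nhds (U.map x)
    (le_principal_iff.2 (show x ⁻¹' K ∈ U from univ_mem' hxK))
  exact ⟨u, mapClusterPt_iff_ultrafilter.2 ⟨U, hU, hu⟩,
    tendsto_nhds_unique ((hF.tendsto u).comp hu) hFx⟩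

lemma MapClusterPt.eq_of_tendsto_comp {Y : Type*} [TopologicalSpace Y] [T2Space Y] {V : X → Y}
    {l : Y} (hV : Continuous V) (hVx : Tendsto (V ∘ x) atTop (𝓝 l))
    (hw : MapClusterPt w atTop x) : V w = l :=
  eq_of_nhds_neBot ((hw.tendsto_comp (hV.tendsto w)).neBot.mono (inf_le_inf_left _ hVx))

end Orbit

section Simplex

variable {n : ℕ} {x : Fin n → ℝ}

lemma apply_le_one_of_mem_simplex (hx : x ∈ simplex n) (i : Fin n) : x i ≤ 1 :=
  (mem_Icc_of_mem_stdSimplex hx i).2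

lemma sub_sq_nonneg_of_mem_simplex (hx : x ∈ simplex n) (i : Fin n) : 0 ≤ x i - x i ^ 2 := by
  nlinarith [hx.1 i, apply_le_one_of_mem_simplex hx i]

lemma sum_le_one_of_mem_simplex (hx : x ∈ simplex n) (A : Finset (Fin n)) :
    ∑ i ∈ A, x i ≤ 1 :=
  hx.2 ▸ sum_le_sum_of_subset_of_nonneg (subset_univ A) fun i _ _ => hx.1 i

lemma eq_vertex_of_apply_eq_one (hx : x ∈ simplex n) {i : Fin n} (hi : x i = 1) :
    x = vertex n i := by
  funext j
  by_cases hji : j = i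
  · simp [vertex, hji, hi]
  · have hpair : x j + x i ≤ 1 := by
      rw [← sum_pair hji]; exact sum_le_one_of_mem_simplex hx _
    simp only [vertex, if_neg hji]
    linarith [hx.1 j]

lemma apply_lt_one_of_ne_vertex (hx : x ∈ simplex n) (hnv : ∀ i, x ≠ vertex n i)
    (i : Fin n) : x i < 1 :=
  (apply_le_one_of_mem_simplex hx i).lt_of_ne fun h => hnv i (eq_vertex_of_apply_eq_one hx h)

lemma vertex_sub_sq (i j : Fin n) : vertex n i j - vertex n i j ^ 2 = 0 := by
  unfold vertex; split_ifs <;> norm_num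

end Simplex

section DeGrootFriedkin

variable {n : ℕ} {C : Matrix (Fin n) (Fin n) ℝ} {x : Fin n → ℝ}

lemma mul_sub_sq_le_DF (hC : IsRIM C) (hx : x ∈ simplex n) (i j : Fin n) :
    C j i * (x j - x j ^ 2) ≤ DF C x i := by
  have := single_le_sum (f := fun k => C k i * (x k - x k ^ 2))
    (fun k _ => mul_nonneg (hC.1 k i) (sub_sq_nonneg_of_mem_simplex hx k)) (mem_univ j)
  exact this.trans (le_add_of_nonneg_right (sq_nonneg (x i)))

lemma sq_le_DF (hC : IsRIM C) (hx : x ∈ simplex n) (i : Fin n) : x i ^ 2 ≤ DF C x i :=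
  le_add_of_nonneg_left <| sum_nonneg fun k _ =>
    mul_nonneg (hC.1 k i) (sub_sq_nonneg_of_mem_simplex hx k)

lemma sum_DF (A : Finset (Fin n)) :
    ∑ i ∈ A, DF C x i = ∑ j, (∑ i ∈ A, C j i) * (x j - x j ^ 2) + ∑ i ∈ A, x i ^ 2 := by
  simp only [DF, sum_add_distrib, sum_mul]
  rw [sum_comm]

lemma DF_mem_simplex (hC : IsRIM C) (hx : x ∈ simplex n) : DF C x ∈ simplex n := by
  refine ⟨fun i => (sq_nonneg _).trans (sq_le_DF hC hx i), ?_⟩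
  simp only [sum_DF, hC.2.1, one_mul, ← sum_add_distrib, sub_add_cancel, hx.2]

lemma DF_vertex (i : Fin n) : DF C (vertex n i) = vertex n i := by
  funext k
  simp only [DF, vertex_sub_sq, mul_zero, sum_const_zero, zero_add]
  unfold vertex; split_ifs <;> norm_num

lemma eq_vertex_of_DF_eq_vertex (hC : IsRIM C) (hx : x ∈ simplex n) {i : Fin n}
    (h : DF C x = vertex n i) : x = vertex n i := by
  refine eq_vertex_of_apply_eq_one hx (le_antisymm (apply_le_one_of_mem_simplex hx i) ?_)
  by_contra hlt
  have hrest : ∀ j ∈ univ.erase i, x j = 0 := fun j hj => by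
    have := sq_le_DF hC hx j
    rw [h, vertex, if_neg (ne_of_mem_erase hj)] at this
    nlinarith
  have := add_sum_erase univ x (mem_univ i)
  rw [sum_eq_zero hrest, hx.2] at this
  linarith

lemma continuous_DF : Continuous (DF C) := by
  unfold DF; fun_prop

lemma orbit_mem_simplex (hC : IsRIM C) {x : ℕ → Fin n → ℝ} (hx0 : x 0 ∈ simplex n)
    (hx : ∀ t, x (t + 1) = DF C (x t)) : ∀ t, x t ∈ simplex n
  | 0 => hx0
  | t + 1 => hx t ▸ DF_mem_simplex hC (orbit_mem_simplex hC hx0 hx t)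

lemma orbit_ne_vertex (hC : IsRIM C) {x : ℕ → Fin n → ℝ} (hx0 : x 0 ∈ simplex n)
    (hnv : ∀ i, x 0 ≠ vertex n i) (hx : ∀ t, x (t + 1) = DF C (x t)) :
    ∀ t i, x t ≠ vertex n i
  | 0 => hnv
  | t + 1 => fun i h => orbit_ne_vertex hC hx0 hnv hx t i <|
      eq_vertex_of_DF_eq_vertex hC (orbit_mem_simplex hC hx0 hx t) (hx t ▸ h)

end DeGrootFriedkin

section NoEntry

variable {n : ℕ} {C : Matrix (Fin n) (Fin n) ℝ} {S : Finset (Fin n)}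

lemma sum_sub_sum_DF (hC : IsRIM C) (hS : ∀ j ∉ S, ∀ i ∈ S, C j i = 0) (x : Fin n → ℝ) :
    ∑ j ∈ S, x j - ∑ j ∈ S, DF C x j = ∑ j ∈ S, (∑ i ∈ Sᶜ, C j i) * (x j - x j ^ 2) := by
  have hout : ∑ j ∈ Sᶜ, (∑ i ∈ S, C j i) * (x j - x j ^ 2) = 0 :=
    sum_eq_zero fun j hj => by rw [sum_eq_zero (hS j (mem_compl.1 hj)), zero_mul]
  have hrow : ∀ j, ∑ i ∈ S, C j i = 1 - ∑ i ∈ Sᶜ, C j i := fun j => by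
    rw [← hC.2.1 j, ← sum_add_sum_compl S]; ring
  rw [sum_DF, ← sum_add_sum_compl S, hout]
  simp only [hrow, sub_mul, one_mul, sum_sub_distrib]
  ring

lemma sum_DF_le (hC : IsRIM C) (hS : ∀ j ∉ S, ∀ i ∈ S, C j i = 0) {x : Fin n → ℝ}
    (hx : x ∈ simplex n) : ∑ j ∈ S, DF C x j ≤ ∑ j ∈ S, x j := by
  have := sum_sub_sum_DF hC hS x
  have : 0 ≤ ∑ j ∈ S, (∑ i ∈ Sᶜ, C j i) * (x j - x j ^ 2) := sum_nonneg fun j _ =>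
    mul_nonneg (sum_nonneg fun i _ => hC.1 j i) (sub_sq_nonneg_of_mem_simplex hx j)
  linarith

lemma sum_eq_zero_of_sum_DF_eq (hC : IsRIM C) (hS : ∀ j ∉ S, ∀ i ∈ S, C j i = 0)
    (hreach : ∀ j ∈ S, ∃ i ∉ S, ∃ k, 0 < (C ^ k) j i)
    {Ω : Set (Fin n → ℝ)} (hΩ : Ω ⊆ simplex n) (hmaps : Set.MapsTo (DF C) Ω Ω)
    (hmass : ∀ w ∈ Ω, ∑ j ∈ S, DF C w j = ∑ j ∈ S, w j)
    {w : Fin n → ℝ} (hw : w ∈ Ω) (hnv : ∀ i, w ≠ vertex n i) : ∑ j ∈ S, w j = 0 := by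
  have hsealed : ∀ v ∈ Ω, ∀ j ∈ S, 0 < v j - v j ^ 2 → ∀ i ∉ S, C j i = 0 := by
    intro v hv j hj hy i hi
    have hzero := sum_sub_sum_DF hC hS v
    rw [hmass v hv, sub_self, eq_comm, sum_eq_zero_iff_of_nonneg fun k _ => mul_nonneg
      (sum_nonneg fun i _ => hC.1 k i) (sub_sq_nonneg_of_mem_simplex (hΩ hv) k)] at hzero
    have hout := (mul_eq_zero.1 (hzero j hj)).resolve_right hy.ne'
    exact (sum_eq_zero_iff_of_nonneg fun i _ => hC.1 j i).1 hout i (mem_compl.2 hi)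
  set P : Fin n → Prop := fun j => j ∈ S ∧ ∃ v ∈ Ω, 0 < v j - v j ^ 2
  have hP : ∀ j l, P j → C j l ≠ 0 → P l := by
    rintro j l ⟨hj, v, hv, hy⟩ hjl
    have hl : l ∈ S := by_contra fun hl => hjl (hsealed v hv j hj hy l hl)
    have hpos : 0 < DF C v l :=
      (mul_pos ((hC.1 j l).lt_of_ne' hjl) hy).trans_le (mul_sub_sq_le_DF hC (hΩ hv) l j)
    have hlt : DF C v l < 1 := by
      refine (apply_le_one_of_mem_simplex (hΩ (hmaps hv)) l).lt_of_ne fun h1 => ?_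
      have := eq_vertex_of_DF_eq_vertex hC (hΩ hv) (eq_vertex_of_apply_eq_one (hΩ (hmaps hv)) h1)
      rw [this, vertex_sub_sq] at hy
      exact hy.false
    exact ⟨hl, DF C v, hmaps hv, by nlinarith⟩
  refine sum_eq_zero fun j hj => ?_
  have hy : w j - w j ^ 2 = 0 := by
    by_contra hne
    obtain ⟨i, hi, k, hk⟩ := hreach j hj
    have hPj : P j := ⟨hj, w, hw, (sub_sq_nonneg_of_mem_simplex (hΩ hw) j).lt_of_ne' hne⟩
    rw [Matrix.pow_apply_eq_zero_of_closed hP k j i hPj fun h => hi h.1] at hk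
    exact hk.false
  have hlt := apply_lt_one_of_ne_vertex (hΩ hw) hnv j
  exact (mul_eq_zero.1 (by linear_combination hy : w j * (1 - w j) = 0)).resolve_right
    (by linarith)

lemma exists_sum_orbit_lt_one (hC : IsRIM C) (hS : ∀ j ∉ S, ∀ i ∈ S, C j i = 0)
    (hreach : ∀ j ∈ S, ∃ i ∉ S, ∃ k, 0 < (C ^ k) j i) {x : ℕ → Fin n → ℝ}
    (hx0 : x 0 ∈ simplex n) (hnv : ∀ i, x 0 ≠ vertex n i) (hx : ∀ t, x (t + 1) = DF C (x t)) :
    ∃ t, ∑ j ∈ S, x t j < 1 := by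
  have hsimp := orbit_mem_simplex hC hx0 hx
  by_contra! hge
  have hconst : ∀ t, ∑ j ∈ S, x t j = 1 := fun t =>
    (sum_le_one_of_mem_simplex (hsimp t) S).antisymm (hge t)
  have hzero := sum_eq_zero_of_sum_DF_eq hC hS hreach (Ω := Set.range x)
    (Set.range_subset_iff.2 hsimp) (by rintro _ ⟨t, rfl⟩; exact ⟨t + 1, hx t⟩)
    (by rintro _ ⟨t, rfl⟩; rw [← hx t, hconst, hconst]) (Set.mem_range_self 0) hnv
  linarith [hconst 0]

theorem tendsto_sum_orbit_zero (hC : IsRIM C) (hS : ∀ j ∉ S, ∀ i ∈ S, C j i = 0)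
    (hreach : ∀ j ∈ S, ∃ i ∉ S, ∃ k, 0 < (C ^ k) j i) {x : ℕ → Fin n → ℝ}
    (hx0 : x 0 ∈ simplex n) (hnv : ∀ i, x 0 ≠ vertex n i) (hx : ∀ t, x (t + 1) = DF C (x t)) :
    Tendsto (fun t => ∑ j ∈ S, x t j) atTop (𝓝 0) := by
  have hsimp := orbit_mem_simplex hC hx0 hx
  set m : ℕ → ℝ := fun t => ∑ j ∈ S, x t j with hm
  have hanti : Antitone m := antitone_nat_of_succ_le fun t => by
    simp only [hm, hx t]; exact sum_DF_le hC hS (hsimp t)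
  have hbdd : BddBelow (Set.range m) :=
    ⟨0, by rintro _ ⟨t, rfl⟩; exact sum_nonneg fun j _ => (hsimp t).1 j⟩
  have hlim := tendsto_atTop_ciInf hanti hbdd
  set μ := ⨅ t, m t
  suffices hμ : μ = 0 by rwa [hμ] at hlim
  obtain ⟨T, hT⟩ := exists_sum_orbit_lt_one hC hS hreach hx0 hnv hx
  have hμ1 : μ < 1 := (ciInf_le hbdd T).trans_lt hT
  have hΩ : {w | MapClusterPt w atTop x} ⊆ simplex n := fun w hw =>
    (isClosed_stdSimplex ℝ (Fin n)).mem_of_mapClusterPt hw (Eventually.of_forall hsimp)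
  have hΩμ : ∀ w, MapClusterPt w atTop x → ∑ j ∈ S, w j = μ := fun w hw =>
    hw.eq_of_tendsto_comp (continuous_finsetSum _ fun j _ => continuous_apply j) hlim
  obtain ⟨w, -, hw⟩ := (isCompact_stdSimplex ℝ (Fin n)).exists_mapClusterPt (f := atTop)
    (le_principal_iff.2 (show x ⁻¹' simplex n ∈ atTop from univ_mem' hsimp))
  by_cases hwv : ∀ i, w ≠ vertex n i
  · rw [← hΩμ w hw]
    refine sum_eq_zero_of_sum_DF_eq hC hS hreach hΩ
      (fun v hv => hv.apply_of_orbit continuous_DF hx) (fun v hv => ?_) hw hwv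
    rw [hΩμ v hv, hΩμ _ (hv.apply_of_orbit continuous_DF hx)]
  push Not at hwv
  obtain ⟨i, rfl⟩ := hwv
  have hvertex := hΩμ _ hw
  simp only [vertex, sum_ite_eq'] at hvertex
  split_ifs at hvertex <;> linarith

end NoEntry

section Star

variable {n : ℕ} {C : Matrix (Fin n) (Fin n) ℝ} {c : Fin n} {L : Finset (Fin n)}
  {x : Fin n → ℝ}

lemma add_sum_add_sum_compl_insert (hcL : c ∉ L) (f : Fin n → ℝ) :
    f c + ∑ j ∈ L, f j + ∑ j ∈ (insert c L)ᶜ, f j = ∑ j, f j := by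
  rw [← sum_add_sum_compl (insert c L), sum_insert hcL]

lemma center_add_drift_le_DF_center (hC : IsRIM C) (hcL : c ∉ L) (hleaf : ∀ j ∈ L, C j c = 1)
    (hx : x ∈ simplex n) :
    x c + (∑ j ∈ (insert c L)ᶜ, x j) * (1 - 2 * x c - ∑ j ∈ (insert c L)ᶜ, x j)
      + ((∑ j ∈ L, x j) ^ 2 - ∑ j ∈ L, x j ^ 2) ≤ DF C x c := by
  set m := ∑ j ∈ (insert c L)ᶜ, x j
  set s := ∑ j ∈ L, x j
  have hsum : x c + s + m = 1 := (add_sum_add_sum_compl_insert hcL x).trans hx.2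
  have hDF : DF C x c = s - ∑ j ∈ L, x j ^ 2
      + ∑ j ∈ (insert c L)ᶜ, C j c * (x j - x j ^ 2) + x c ^ 2 := by
    rw [DF, ← add_sum_add_sum_compl_insert hcL, hC.2.2 c, zero_mul, zero_add,
      sum_congr rfl fun j hj => by rw [hleaf j hj, one_mul], sum_sub_distrib]
  have hrest : 0 ≤ ∑ j ∈ (insert c L)ᶜ, C j c * (x j - x j ^ 2) :=
    sum_nonneg fun j _ => mul_nonneg (hC.1 j c) (sub_sq_nonneg_of_mem_simplex hx j)
  have key : x c + m * (1 - 2 * x c - m) + s ^ 2 = s + x c ^ 2 := by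
    linear_combination (s - x c - m) * hsum
  linarith

lemma center_le_DF_center (hC : IsRIM C) (hcL : c ∉ L) (hleaf : ∀ j ∈ L, C j c = 1)
    (hx : x ∈ simplex n) (hface : ∑ j ∈ (insert c L)ᶜ, x j = 0) : x c ≤ DF C x c := by
  have hdrift := center_add_drift_le_DF_center hC hcL hleaf hx
  have hsq := sum_sq_le_sq_sum_of_nonneg (s := L) fun j _ => hx.1 j
  rw [hface] at hdrift
  linarith

lemma center_lt_DF_center (hC : IsRIM C) (hcL : c ∉ L) (hleaf : ∀ j ∈ L, C j c = 1)
    (hx : x ∈ simplex n) (hface : ∑ j ∈ (insert c L)ᶜ, x j = 0) {a b : Fin n} (ha : a ∈ L)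
    (hb : b ∈ L) (hab : a ≠ b) (hxa : 0 < x a) (hxb : 0 < x b) : x c < DF C x c := by
  have hdrift := center_add_drift_le_DF_center hC hcL hleaf hx
  have hsq := two_mul_le_sq_sum_sub_sum_sq (fun j _ => hx.1 j) ha hb hab
  rw [hface] at hdrift
  nlinarith [mul_pos hxa hxb]

lemma min_center_le_DF_center (hC : IsRIM C) (hcL : c ∉ L) (hleaf : ∀ j ∈ L, C j c = 1)
    (hx : x ∈ simplex n) (hm : ∑ j ∈ (insert c L)ᶜ, x j < 1 / 16) :
    min (x c) (1 / 4) ≤ DF C x c := by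
  have hdrift := center_add_drift_le_DF_center hC hcL hleaf hx
  have hsq := sum_sq_le_sq_sum_of_nonneg (s := L) fun j _ => hx.1 j
  have hm0 : 0 ≤ ∑ j ∈ (insert c L)ᶜ, x j := sum_nonneg fun j _ => hx.1 j
  have hc1 := apply_le_one_of_mem_simplex hx c
  rcases le_or_gt (x c) (7 / 16) with hc | hc
  · refine (min_le_left _ _).trans ?_
    nlinarith
  · refine (min_le_right _ _).trans ?_
    nlinarith

lemma DF_center_pos (hC : IsRIM C) (hcL : c ∉ L) (hleaf : ∀ j ∈ L, C j c = 1)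
    (hx : x ∈ simplex n) (hnv : ∀ i, x ≠ vertex n i) (hm : ∑ j ∈ (insert c L)ᶜ, x j < 1) :
    0 < DF C x c := by
  rcases (hx.1 c).lt_or_eq with hc | hc
  · exact (pow_pos hc 2).trans_le (sq_le_DF hC hx c)
  have hleaves : ∑ j ∈ L, (0 : ℝ) < ∑ j ∈ L, x j := by
    have := add_sum_add_sum_compl_insert hcL x
    rw [hx.2, ← hc] at this
    simp only [sum_const_zero]
    linarith
  obtain ⟨j, hj, hxj⟩ := exists_lt_of_sum_lt hleaves
  have hy : 0 < x j - x j ^ 2 := by nlinarith [apply_lt_one_of_ne_vertex hx hnv j]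
  have := mul_sub_sq_le_DF hC hx c j
  rw [hleaf j hj, one_mul] at this
  linarith

end Star

lemma IsRIM.apply_eq_zero_of_apply_eq_one {n : ℕ} {C : Matrix (Fin n) (Fin n) ℝ}
    (hC : IsRIM C) {j c i : Fin n} (hjc : C j c = 1) (hi : i ≠ c) : C j i = 0 := by
  rw [eq_vertex_of_apply_eq_one ⟨hC.1 j, hC.2.1 j⟩ hjc, vertex, if_neg hi]

lemma IsRIM.closed_of_globallyReachable {n : ℕ} {C : Matrix (Fin n) (Fin n) ℝ} {c : Fin n}
    {L : Finset (Fin n)} (hC : IsRIM C) (hc : GloballyReachable C c)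
    (hleaf : ∀ j ∈ L, C j c = 1) (hrest : ∀ i ∈ (insert c L)ᶜ, ¬ GloballyReachable C i) :
    ∀ j ∉ (insert c L)ᶜ, ∀ i ∈ (insert c L)ᶜ, C j i = 0 := by
  intro j hj i hi
  rcases mem_insert.1 (not_not.1 (mem_compl.not.1 hj)) with rfl | hjL
  · by_contra hne
    exact hrest i hi (hc.of_apply_pos hC.1 ((hC.1 _ i).lt_of_ne' hne))
  · exact hC.apply_eq_zero_of_apply_eq_one (hleaf j hjL) fun hic => by simp [hic] at hi

/-- `insert c L` spans a star with centre `c`, and no edge of `G(C)` leaves it. -/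
structure IsClosedStar {n : ℕ} (C : Matrix (Fin n) (Fin n) ℝ) (c : Fin n) (L : Finset (Fin n)) :
    Prop where
  rim : IsRIM C
  center_notMem : c ∉ L
  leaf_center : ∀ j ∈ L, C j c = 1
  center_leaf_pos : ∀ j ∈ L, 0 < C c j
  one_lt_card : 1 < L.card
  closed : ∀ j ∉ (insert c L)ᶜ, ∀ i ∈ (insert c L)ᶜ, C j i = 0

namespace IsClosedStar

variable {n : ℕ} {C : Matrix (Fin n) (Fin n) ℝ} {c : Fin n} {L : Finset (Fin n)}
  {x : Fin n → ℝ}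

lemma DF_center_lt_DF_DF_center (h : IsClosedStar C c L) (hx : x ∈ simplex n)
    (hface : ∑ j ∈ (insert c L)ᶜ, x j = 0) (hc0 : 0 < x c) (hc1 : x c < 1) :
    DF C x c < DF C (DF C x) c := by
  have hFx := DF_mem_simplex h.rim hx
  have hface' : ∑ j ∈ (insert c L)ᶜ, DF C x j = 0 :=
    le_antisymm (hface ▸ sum_DF_le h.rim h.closed hx) (sum_nonneg fun j _ => hFx.1 j)
  have hy : 0 < x c - x c ^ 2 := by nlinarith
  have hleaf : ∀ j ∈ L, 0 < DF C x j := fun j hj =>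
    (mul_pos (h.center_leaf_pos j hj) hy).trans_le (mul_sub_sq_le_DF h.rim hx j c)
  obtain ⟨a, ha, b, hb, hab⟩ := Finset.one_lt_card.1 h.one_lt_card
  exact center_lt_DF_center h.rim h.center_notMem h.leaf_center hFx hface' ha hb hab
    (hleaf a ha) (hleaf b hb)

theorem eq_vertex_of_DF_eq_self (h : IsClosedStar C c L)
    (hreach : ∀ j ∈ (insert c L)ᶜ, ∃ i ∉ (insert c L)ᶜ, ∃ k, 0 < (C ^ k) j i)
    (hx : x ∈ simplex n) (hfix : DF C x = x) : ∃ i, x = vertex n i := by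
  by_contra hnv
  push Not at hnv
  have hface : ∑ j ∈ (insert c L)ᶜ, x j = 0 :=
    sum_eq_zero_of_sum_DF_eq h.rim h.closed hreach (Ω := {x}) (by simpa using hx)
      (by simp [Set.MapsTo, hfix]) (by simp [hfix]) rfl hnv
  rcases (hx.1 c).lt_or_eq with hc | hc
  · have := h.DF_center_lt_DF_DF_center hx hface hc (apply_lt_one_of_ne_vertex hx hnv c)
    rw [hfix, hfix] at this
    exact this.false
  · have := DF_center_pos h.rim h.center_notMem h.leaf_center hx hnv (by rw [hface]; norm_num)
    rw [hfix, ← hc] at this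
    exact this.false

lemma exists_eventually_le_orbit_center (h : IsClosedStar C c L) {x : ℕ → Fin n → ℝ}
    (hx0 : x 0 ∈ simplex n) (hnv : ∀ i, x 0 ≠ vertex n i) (hx : ∀ t, x (t + 1) = DF C (x t))
    (hm : Tendsto (fun t => ∑ j ∈ (insert c L)ᶜ, x t j) atTop (𝓝 0)) :
    ∃ b, 0 < b ∧ ∀ᶠ t in atTop, b ≤ x t c := by
  have hsimp := orbit_mem_simplex h.rim hx0 hx
  obtain ⟨T, hT⟩ :=
    eventually_atTop.1 (hm.eventually (gt_mem_nhds (by norm_num : (0 : ℝ) < 1 / 16)))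
  have hpos : 0 < x (T + 1) c := by
    rw [hx T]
    exact DF_center_pos h.rim h.center_notMem h.leaf_center (hsimp T)
      (orbit_ne_vertex h.rim hx0 hnv hx T) ((hT T le_rfl).trans (by norm_num))
  refine ⟨min (x (T + 1) c) (1 / 4), lt_min hpos (by norm_num),
    eventually_atTop.2 ⟨T + 1, fun t ht => ?_⟩⟩
  induction t, ht using Nat.le_induction with
  | base => exact min_le_left _ _
  | succ t ht ih =>
    rw [hx t]
    exact (le_min ih (min_le_right _ _)).trans
      (min_center_le_DF_center h.rim h.center_notMem h.leaf_center (hsimp t) (hT t (by omega)))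

lemma center_eq_one_of_isMinOn (h : IsClosedStar C c L) {Ω : Set (Fin n → ℝ)}
    (hΩ : Ω ⊆ simplex n) (hface : ∀ w ∈ Ω, ∑ j ∈ (insert c L)ᶜ, w j = 0)
    (hpos : ∀ w ∈ Ω, 0 < w c) (hpred : ∀ w ∈ Ω, ∃ u ∈ Ω, DF C u = w) {w : Fin n → ℝ}
    (hw : w ∈ Ω) (hmin : IsMinOn (fun v => v c) Ω w) : w c = 1 := by
  refine (apply_le_one_of_mem_simplex (hΩ hw) c).antisymm (not_lt.1 fun hlt => ?_)
  obtain ⟨v, hv, rfl⟩ := hpred w hw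
  obtain ⟨u, hu, rfl⟩ := hpred v hv
  have hu1 := center_le_DF_center h.rim h.center_notMem h.leaf_center (hΩ hu) (hface u hu)
  have hv1 := center_le_DF_center h.rim h.center_notMem h.leaf_center (hΩ hv) (hface _ hv)
  have hstrict := h.DF_center_lt_DF_DF_center (hΩ hu) (hface u hu) (hpos u hu) (by linarith)
  linarith [isMinOn_iff.1 hmin _ hv]

theorem tendsto_vertex_center (h : IsClosedStar C c L)
    (hreach : ∀ j ∈ (insert c L)ᶜ, ∃ i ∉ (insert c L)ᶜ, ∃ k, 0 < (C ^ k) j i)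
    {x : ℕ → Fin n → ℝ} (hx0 : x 0 ∈ simplex n) (hnv : ∀ i, x 0 ≠ vertex n i)
    (hx : ∀ t, x (t + 1) = DF C (x t)) : Tendsto x atTop (𝓝 (vertex n c)) := by
  have hsimp := orbit_mem_simplex h.rim hx0 hx
  have hK := isCompact_stdSimplex ℝ (Fin n)
  have hm := tendsto_sum_orbit_zero h.rim h.closed hreach hx0 hnv hx
  obtain ⟨b, hb, hbx⟩ := h.exists_eventually_le_orbit_center hx0 hnv hx hm
  set Ω := {w | MapClusterPt w atTop x}
  have hΩ : Ω ⊆ simplex n := fun w hw =>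
    (isClosed_stdSimplex ℝ (Fin n)).mem_of_mapClusterPt hw (Eventually.of_forall hsimp)
  have hΩface : ∀ w ∈ Ω, ∑ j ∈ (insert c L)ᶜ, w j = 0 := fun w hw =>
    MapClusterPt.eq_of_tendsto_comp (continuous_finsetSum _ fun j _ => continuous_apply j) hm hw
  have hΩb : ∀ w ∈ Ω, b ≤ w c := fun w hw =>
    (isClosed_le continuous_const (continuous_apply c)).mem_of_mapClusterPt hw hbx
  obtain ⟨w₀, -, hw₀⟩ := hK.exists_mapClusterPt (f := atTop)
    (le_principal_iff.2 (show x ⁻¹' simplex n ∈ atTop from univ_mem' hsimp))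
  obtain ⟨w, hw, hmin⟩ := (hK.of_isClosed_subset isClosed_setOfPred_clusterPt hΩ).exists_isMinOn
    ⟨w₀, hw₀⟩ (continuous_apply c).continuousOn
  have hw1 := h.center_eq_one_of_isMinOn hΩ hΩface (fun v hv => hb.trans_le (hΩb v hv))
    (fun v hv => MapClusterPt.exists_apply_eq_of_orbit hK hsimp continuous_DF hx hv) hw hmin
  exact hK.tendsto_nhds_of_unique_mapClusterPt (Eventually.of_forall hsimp) fun v _ hv =>
    eq_vertex_of_apply_eq_one (hΩ hv)
      ((apply_le_one_of_mem_simplex (hΩ hv) c).antisymm (hw1 ▸ isMinOn_iff.1 hmin v hv))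

end IsClosedStar

theorem stmt11 {n : ℕ} (hn : 3 ≤ n) (C : Matrix (Fin n) (Fin n) ℝ) (hC : IsRIM C)
    (r : ℕ) (hr : 3 ≤ r)
    (hgr : ∀ i : Fin n, GloballyReachable C i ↔ (i : ℕ) < r)
    (hstar1 : ∀ j : Fin n, 1 ≤ (j : ℕ) → (j : ℕ) < r → C j ⟨0, by omega⟩ = 1)
    (hstar2 : ∀ j : Fin n, 1 ≤ (j : ℕ) → (j : ℕ) < r → 0 < C ⟨0, by omega⟩ j) :
    (∀ x ∈ simplex n, (DF C x = x ↔ ∃ i, x = vertex n i)) ∧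
    (∀ x : ℕ → Fin n → ℝ, x 0 ∈ simplex n → (∀ i, x 0 ≠ vertex n i) →
      (∀ t, x (t + 1) = DF C (x t)) →
      Filter.Tendsto x Filter.atTop (nhds (vertex n ⟨0, by omega⟩))) := by
  set c : Fin n := ⟨0, by omega⟩
  set L : Finset (Fin n) := univ.filter fun j => 1 ≤ (j : ℕ) ∧ (j : ℕ) < r
  have hL : ∀ j, j ∈ L ↔ 1 ≤ (j : ℕ) ∧ (j : ℕ) < r := by simp [L]
  have hrest : ∀ j, j ∈ (insert c L)ᶜ ↔ r ≤ (j : ℕ) := fun j => by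
    simp [hL, c, Fin.ext_iff]; omega
  have hcgr : GloballyReachable C c := (hgr c).2 (by simp [c]; omega)
  have hleaf : ∀ j ∈ L, C j c = 1 := fun j hj => hstar1 j ((hL j).1 hj).1 ((hL j).1 hj).2
  have h : IsClosedStar C c L :=
    ⟨hC, by simp [hL, c], hleaf, fun j hj => hstar2 j ((hL j).1 hj).1 ((hL j).1 hj).2,
      one_lt_card.2 ⟨⟨1, by omega⟩, by simp [hL]; omega, ⟨2, by omega⟩, by simp [hL]; omega,
        by simp [Fin.ext_iff]⟩,
      hC.closed_of_globallyReachable hcgr hleaf fun i hi hgi => by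
        have := (hgr i).1 hgi; have := (hrest i).1 hi; omega⟩
  have hreach : ∀ j ∈ (insert c L)ᶜ, ∃ i ∉ (insert c L)ᶜ, ∃ k, 0 < (C ^ k) j i :=
    fun j hj => ⟨c, by simp, (hcgr j fun h => by simp [h] at hj).imp fun _ hk => hk.2⟩
  refine ⟨fun x hx => ⟨h.eq_vertex_of_DF_eq_self hreach hx, ?_⟩,
    fun x hx0 hnv hx => h.tendsto_vertex_center hreach hx0 hnv hx⟩
  rintro ⟨i, rfl⟩
  exact DF_vertex i
end

section
/- Let n ≥ 3 and let C be a relative interaction matrix whose digraph G(C) has exactly the globally reachable nodes {1, …, r} with 2 ≤ r < n. Then for every initial condition x(0) ∈ Δⁿ \ {e_1, …, e_n}, along the iterates x(t+1) = F(x(t)) the total self-weight of the non-reachable nodes, s(t) = ∑_{i=r+1}^n x_i(t), is non-increasing in t and converges exponentially to 0: there exist M > 0 and ρ ∈ (0,1) with s(t) ≤ M ρᵗ for all t ≥ 0. -/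
section Aux
variable {n : ℕ} {C : Matrix (Fin n) (Fin n) ℝ}
  (h0 : ∀ i j, 0 ≤ C i j) (h1 : ∀ i, ∑ j, C i j = 1)
include h0 h1
set_option linter.unusedSectionVars false

lemma powNN : ∀ k (i j : Fin n), 0 ≤ (C ^ k) i j := by
  intro k
  induction k with
  | zero =>
    intro i j
    rw [pow_zero, Matrix.one_apply]
    split <;> norm_num
  | succ k ih =>
    intro i j
    rw [pow_succ, Matrix.mul_apply]
    exact Finset.sum_nonneg fun m _ => mul_nonneg (ih i m) (h0 m j)

lemma powRS : ∀ k (i : Fin n), ∑ j, (C ^ k) i j = 1 := by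
  intro k
  induction k with
  | zero => intro i; simp [Matrix.one_apply]
  | succ k ih =>
    intro i
    rw [pow_succ']
    simp only [Matrix.mul_apply]
    rw [Finset.sum_comm]
    calc ∑ m, ∑ j, C i m * (C ^ k) m j = ∑ m, C i m * ∑ j, (C ^ k) m j := by
          simp [Finset.mul_sum]
      _ = 1 := by simp only [ih, mul_one]; exact h1 i

lemma entry_le_one (i j : Fin n) : C i j ≤ 1 := by
  calc C i j ≤ ∑ k, C i k := Finset.single_le_sum (fun k _ => h0 i k) (Finset.mem_univ j)
    _ = 1 := h1 i

lemma pow_entry_mul_le (k : ℕ) (a b m : Fin n) :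
    (C ^ (k+1)) a b ≥ C a m * (C ^ k) m b := by
  rw [pow_succ', Matrix.mul_apply]
  exact Finset.single_le_sum (f := fun m => C a m * (C ^ k) m b)
    (fun p _ => mul_nonneg (h0 a p) (powNN h0 h1 k p b)) (Finset.mem_univ m)

lemma pow_entry_mul_le' (k : ℕ) (a b m : Fin n) :
    (C ^ (k+1)) a b ≥ (C ^ k) a m * C m b := by
  rw [pow_succ, Matrix.mul_apply]
  exact Finset.single_le_sum (f := fun m => (C ^ k) a m * C m b)
    (fun p _ => mul_nonneg (powNN h0 h1 k a p) (h0 p b)) (Finset.mem_univ m)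

lemma simplex_le_one {x : Fin n → ℝ} (hx : x ∈ simplex n) (i : Fin n) : x i ≤ 1 := by
  obtain ⟨hnn, hsum⟩ := hx
  calc x i ≤ ∑ j, x j := Finset.single_le_sum (fun j _ => hnn j) (Finset.mem_univ i)
    _ = 1 := hsum

lemma DF_mem {x : Fin n → ℝ} (hx : x ∈ simplex n) : DF C x ∈ simplex n := by
  obtain ⟨hnn, hsum⟩ := hx
  constructor
  · intro i
    apply add_nonneg
    · exact Finset.sum_nonneg fun j _ => mul_nonneg (h0 j i)
        (by nlinarith [hnn j, simplex_le_one h0 h1 ⟨hnn, hsum⟩ j])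
    · positivity
  · simp only [DF]
    rw [Finset.sum_add_distrib, Finset.sum_comm]
    have : ∀ j : Fin n, ∑ i, C j i * (x j - x j ^ 2) = x j - x j ^ 2 := by
      intro j
      rw [← Finset.sum_mul, h1 j, one_mul]
    rw [Finset.sum_congr rfl fun j _ => this j]
    rw [Finset.sum_sub_distrib]
    linarith [hsum]


lemma exists_pos {x : Fin n → ℝ} (hx : x ∈ simplex n) : ∃ j, 0 < x j := by
  by_contra h
  push_neg at h
  have : ∑ j, x j ≤ 0 := Finset.sum_nonpos fun j _ => h j
  rw [hx.2] at this
  linarith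

lemma DF_lt_one {x : Fin n → ℝ} (hC2 : ∀ i, C i i = 0) (hx : x ∈ simplex n)
    (hlt : ∀ j, x j < 1) (i : Fin n) : DF C x i < 1 := by
  obtain ⟨hnn, hsum⟩ := hx
  have hy : ∀ j, 0 ≤ x j - x j ^ 2 := fun j => by nlinarith [hnn j, (hlt j).le]
  have hb : ∑ j, C j i * (x j - x j ^ 2) ≤ ∑ j ∈ Finset.univ.erase i, (x j - x j ^ 2) := by
    rw [← Finset.add_sum_erase _ _ (Finset.mem_univ i), hC2 i, zero_mul, zero_add]
    exact Finset.sum_le_sum fun j _ => by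
      nlinarith [hy j, entry_le_one h0 h1 j i, h0 j i]
  obtain ⟨j0, hj0⟩ := exists_pos h0 h1 (⟨hnn, hsum⟩ : x ∈ simplex n)
  have herase : ∑ j ∈ Finset.univ.erase i, x j = 1 - x i := by
    have := Finset.add_sum_erase Finset.univ x (Finset.mem_univ i)
    rw [hsum] at this
    linarith
  rcases eq_or_lt_of_le (hnn i) with hzero | hpos
  · -- x i = 0
    have hji : j0 ≠ i := fun h => by rw [h, ← hzero] at hj0; exact lt_irrefl _ hj0
    have hsq : x j0 ^ 2 ≤ ∑ j ∈ Finset.univ.erase i, x j ^ 2 :=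
      Finset.single_le_sum (f := fun j => x j ^ 2) (fun j _ => sq_nonneg _)
        (Finset.mem_erase.mpr ⟨hji, Finset.mem_univ j0⟩)
    have : ∑ j ∈ Finset.univ.erase i, (x j - x j ^ 2) ≤ (1 - x i) - x j0 ^ 2 := by
      rw [Finset.sum_sub_distrib, herase]
      linarith
    simp only [DF]
    nlinarith [hj0]
  · simp only [DF]
    have : ∑ j ∈ Finset.univ.erase i, (x j - x j ^ 2) ≤ 1 - x i := by
      rw [Finset.sum_sub_distrib, herase]
      have : 0 ≤ ∑ j ∈ Finset.univ.erase i, x j ^ 2 :=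
        Finset.sum_nonneg fun j _ => sq_nonneg _
      linarith
    nlinarith [hlt i]

lemma DF_pos_step {x : Fin n → ℝ} (hx : x ∈ simplex n) {j i : Fin n}
    (hji : 0 < C j i) (hj : 0 < x j) (hj1 : x j < 1) : 0 < DF C x i := by
  have hy : ∀ m, 0 ≤ x m - x m ^ 2 := fun m => by
    nlinarith [hx.1 m, simplex_le_one h0 h1 hx m]
  have : C j i * (x j - x j ^ 2) ≤ ∑ m, C m i * (x m - x m ^ 2) :=
    Finset.single_le_sum (f := fun m => C m i * (x m - x m ^ 2))
      (fun m _ => mul_nonneg (h0 m i) (hy m)) (Finset.mem_univ j)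
  have hpos : 0 < C j i * (x j - x j ^ 2) := mul_pos hji (by nlinarith)
  simp only [DF]
  nlinarith [sq_nonneg (x i)]


variable {r : ℕ} (hgr : ∀ i : Fin n, GloballyReachable C i ↔ (i : ℕ) < r)
include hgr

lemma block_zero : ∀ j i : Fin n, (j : ℕ) < r → r ≤ (i : ℕ) → C j i = 0 := by
  intro j i hj hi
  by_contra hne
  have hpos : 0 < C j i := lt_of_le_of_ne (h0 j i) (Ne.symm hne)
  have hgrj : GloballyReachable C j := (hgr j).mpr hj
  have hgri : GloballyReachable C i := by
    intro k hki
    by_cases hkj : k = j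
    · exact ⟨1, le_refl 1, by rw [pow_one, hkj]; exact hpos⟩
    · obtain ⟨p, hp1, hppos⟩ := hgrj k hkj
      refine ⟨p + 1, by omega, ?_⟩
      calc (0:ℝ) < (C ^ p) k j * C j i := mul_pos hppos hpos
        _ ≤ (C ^ (p+1)) k i := pow_entry_mul_le' h0 h1 p k i j
  have := (hgr i).mp hgri
  omega

lemma pow_block_zero : ∀ (k : ℕ) (j i : Fin n), (j : ℕ) < r → r ≤ (i : ℕ) → (C ^ k) j i = 0 := by
  intro k
  induction k with
  | zero =>
    intro j i hj hi
    rw [pow_zero, Matrix.one_apply]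
    have : j ≠ i := by intro h; rw [h] at hj; omega
    simp [this]
  | succ k ih =>
    intro j i hj hi
    rw [pow_succ', Matrix.mul_apply]
    apply Finset.sum_eq_zero
    intro m _
    by_cases hm : (m : ℕ) < r
    · rw [ih m i hm hi, mul_zero]
    · rw [block_zero h0 h1 hgr j m hj (by omega), zero_mul]


omit hgr in
lemma exists_c : ∃ c : ℝ, 0 < c ∧ c ≤ 1/2 ∧ ∀ i j, 0 < C i j → c ≤ C i j := by
  classical
  by_cases hne : ((Finset.univ ×ˢ Finset.univ).filter fun p : Fin n × Fin n => 0 < C p.1 p.2).Nonempty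
  · obtain ⟨p, hp, hmin⟩ := Finset.exists_min_image _ (fun p : Fin n × Fin n => C p.1 p.2) hne
    have hppos : 0 < C p.1 p.2 := (Finset.mem_filter.mp hp).2
    refine ⟨min (1/2) (C p.1 p.2), lt_min (by norm_num) hppos, min_le_left _ _, ?_⟩
    intro i j hij
    exact le_trans (min_le_right _ _) (hmin (i, j) (Finset.mem_filter.mpr ⟨by simp, hij⟩))
  · exact ⟨1/2, by norm_num, le_refl _, fun i j hij =>
      absurd ⟨(i, j), Finset.mem_filter.mpr ⟨by simp, hij⟩⟩ hne⟩

omit hgr in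
lemma sum_pos_exists {s : Finset (Fin n)} {f : Fin n → ℝ} (hnn : ∀ m ∈ s, 0 ≤ f m)
    (hpos : 0 < ∑ m ∈ s, f m) : ∃ m ∈ s, 0 < f m := by
  by_contra h
  push_neg at h
  have : ∑ m ∈ s, f m ≤ 0 := Finset.sum_nonpos fun m hm => h m hm
  linarith

omit hgr in
lemma pow_lower {c : ℝ} (hc0 : 0 ≤ c) (hc : ∀ i j, 0 < C i j → c ≤ C i j) :
    ∀ k (a b : Fin n), 0 < (C ^ k) a b → c ^ k ≤ (C ^ k) a b := by
  intro k
  induction k with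
  | zero =>
    intro a b h
    simp only [pow_zero, Matrix.one_apply] at h ⊢
    by_cases hab : a = b <;> simp [hab] at h ⊢
  | succ k ih =>
    intro a b h
    have hexp : (C ^ (k + 1)) a b = ∑ p, C a p * (C ^ k) p b := by
      rw [pow_succ', Matrix.mul_apply]
    rw [hexp] at h
    rw [hexp]
    obtain ⟨m, _, hm⟩ := sum_pos_exists (h0 := h0) (h1 := h1)
      (fun m _ => mul_nonneg (h0 a m) (powNN h0 h1 k m b)) h
    have h1m : 0 < C a m := by
      rcases lt_or_ge 0 (C a m) with h' | h'
      · exact h'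
      · exfalso; nlinarith [powNN h0 h1 k m b, h0 a m]
    have h2m : 0 < (C ^ k) m b := by
      rcases lt_or_ge 0 ((C ^ k) m b) with h' | h'
      · exact h'
      · exfalso; nlinarith [h0 a m]
    calc c ^ (k + 1) = c * c ^ k := by ring
      _ ≤ C a m * (C ^ k) m b := mul_le_mul (hc a m h1m) (ih m b h2m)
          (pow_nonneg hc0 k) (h0 a m)
      _ ≤ ∑ p, C a p * (C ^ k) p b := Finset.single_le_sum
          (fun p _ => mul_nonneg (h0 a p) (powNN h0 h1 k p b)) (Finset.mem_univ m)

end Aux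

noncomputable def uu {n : ℕ} (C : Matrix (Fin n) (Fin n) ℝ) (r : ℕ) (k : ℕ) (j : Fin n) : ℝ :=
  ∑ i ∈ Finset.univ.filter (fun i : Fin n => r ≤ (i : ℕ)), (C ^ k) j i

section U
variable {n : ℕ} {C : Matrix (Fin n) (Fin n) ℝ}
  (h0 : ∀ i j, 0 ≤ C i j) (h1 : ∀ i, ∑ j, C i j = 1)
  {r : ℕ} (hgr : ∀ i : Fin n, GloballyReachable C i ↔ (i : ℕ) < r)
include h0 h1
set_option linter.unusedSectionVars false

lemma uu_nonneg (k : ℕ) (j : Fin n) : 0 ≤ uu C r k j :=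
  Finset.sum_nonneg fun i _ => powNN h0 h1 k j i

lemma uu_le_one (k : ℕ) (j : Fin n) : uu C r k j ≤ 1 := by
  unfold uu
  calc ∑ i ∈ Finset.univ.filter (fun i : Fin n => r ≤ (i : ℕ)), (C ^ k) j i
      ≤ ∑ i, (C ^ k) j i := Finset.sum_le_sum_of_subset_of_nonneg (Finset.filter_subset _ _)
        (fun i _ _ => powNN h0 h1 k j i)
    _ = 1 := powRS h0 h1 k j

lemma uu_zero_S {j : Fin n} (hj : r ≤ (j : ℕ)) : uu C r 0 j = 1 := by
  unfold uu
  simp only [pow_zero, Matrix.one_apply]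
  rw [Finset.sum_ite_eq (Finset.univ.filter (fun i : Fin n => r ≤ (i : ℕ))) j (fun _ => (1:ℝ))]
  simp [hj]

include hgr in
lemma uu_zero_R (k : ℕ) {j : Fin n} (hj : (j : ℕ) < r) : uu C r k j = 0 :=
  Finset.sum_eq_zero fun i hi => pow_block_zero h0 h1 hgr k j i hj (Finset.mem_filter.mp hi).2

include hgr in
lemma uu_rec (k : ℕ) (j : Fin n) : uu C r (k + 1) j = ∑ m, C j m * uu C r k m := by
  unfold uu
  simp only [pow_succ', Matrix.mul_apply]
  rw [Finset.sum_comm]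
  exact Finset.sum_congr rfl fun m _ => by rw [Finset.mul_sum]

include hgr in
lemma uu_mono : ∀ (k : ℕ) (j : Fin n), uu C r (k + 1) j ≤ uu C r k j := by
  intro k
  induction k with
  | zero =>
    intro j
    by_cases hj : r ≤ (j : ℕ)
    · rw [uu_zero_S h0 h1 hj]; exact uu_le_one h0 h1 1 j
    · rw [uu_zero_R h0 h1 hgr 1 (by omega), uu_zero_R h0 h1 hgr 0 (by omega)]
  | succ k ih =>
    intro j
    rw [uu_rec h0 h1 hgr, uu_rec h0 h1 hgr]
    exact Finset.sum_le_sum fun m _ => mul_le_mul_of_nonneg_left (ih m) (h0 j m)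

include hgr in
lemma uu_anti {a b : ℕ} (hab : a ≤ b) (j : Fin n) : uu C r b j ≤ uu C r a j := by
  induction b, hab using Nat.le_induction with
  | base => exact le_refl _
  | succ b hb ih => exact le_trans (uu_mono h0 h1 hgr b j) ih

end U


set_option maxHeartbeats 2000000 in
theorem stmt13 {n : ℕ} (hn : 3 ≤ n) (C : Matrix (Fin n) (Fin n) ℝ) (hC : IsRIM C)
    (r : ℕ) (hr : 2 ≤ r) (hrn : r < n)
    (hgr : ∀ i : Fin n, GloballyReachable C i ↔ (i : ℕ) < r)
    (x : ℕ → Fin n → ℝ) (hx0 : x 0 ∈ simplex n) (hx0v : ∀ i, x 0 ≠ vertex n i)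
    (hrec : ∀ t, x (t + 1) = DF C (x t)) :
    (∀ t, ∑ i ∈ Finset.univ.filter (fun i : Fin n => r ≤ (i : ℕ)), x (t + 1) i ≤
          ∑ i ∈ Finset.univ.filter (fun i : Fin n => r ≤ (i : ℕ)), x t i) ∧
    (∃ M > (0 : ℝ), ∃ ρ ∈ Set.Ioo (0 : ℝ) 1, ∀ t,
      ∑ i ∈ Finset.univ.filter (fun i : Fin n => r ≤ (i : ℕ)), x t i ≤ M * ρ ^ t) := by
  classical
  obtain ⟨h0, h1, h2⟩ := hC
  set S : Finset (Fin n) := Finset.univ.filter (fun i : Fin n => r ≤ (i : ℕ)) with hS_def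
  have hmemS : ∀ i : Fin n, i ∈ S ↔ r ≤ (i : ℕ) := by
    intro i; rw [hS_def, Finset.mem_filter]; simp
  -- simplex invariance
  have hsimp : ∀ t, x t ∈ simplex n := by
    intro t
    induction t with
    | zero => exact hx0
    | succ t ih => rw [hrec t]; exact DF_mem h0 h1 ih
  have hxnn : ∀ t i, 0 ≤ x t i := fun t => (hsimp t).1
  have hxle1 : ∀ t i, x t i ≤ 1 := fun t => simplex_le_one h0 h1 (hsimp t)
  have hy : ∀ t j, 0 ≤ x t j - (x t j) ^ 2 := by
    intro t j; nlinarith [hxnn t j, hxle1 t j]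
  -- all coordinates < 1 for all time
  have hlt1 : ∀ t i, x t i < 1 := by
    intro t
    induction t with
    | zero =>
      intro i
      rcases lt_or_eq_of_le (hxle1 0 i) with h | h
      · exact h
      · exfalso
        apply hx0v i
        have hz : ∑ j ∈ Finset.univ.erase i, x 0 j = 0 := by
          have h' := Finset.add_sum_erase Finset.univ (x 0) (Finset.mem_univ i)
          rw [hx0.2] at h'
          rw [← h] at h'
          linarith
        have hzero : ∀ j ∈ Finset.univ.erase i, x 0 j = 0 := by
          intro j hj
          have h2' : x 0 j ≤ 0 := by
            have h3' := Finset.sum_le_sum_of_subset_of_nonneg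
              (Finset.singleton_subset_iff.mpr hj) (fun p _ _ => hxnn 0 p)
            rw [Finset.sum_singleton, hz] at h3'
            exact h3'
          linarith [hxnn 0 j]
        funext j
        simp only [vertex]
        by_cases hji : j = i
        · rw [if_pos hji, hji]; exact h
        · rw [if_neg hji]
          exact hzero j (Finset.mem_erase.mpr ⟨hji, Finset.mem_univ j⟩)
    | succ t ih =>
      rw [hrec t]
      exact DF_lt_one h0 h1 h2 (hsimp t) ih
  -- sum over S of DF
  have hsum_S : ∀ t, ∑ i ∈ S, x (t + 1) i =
      ∑ j, (x t j - (x t j) ^ 2) * (∑ i ∈ S, C j i) + ∑ i ∈ S, (x t i) ^ 2 := by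
    intro t
    rw [hrec t]
    simp only [DF]
    rw [Finset.sum_add_distrib]
    congr 1
    rw [Finset.sum_comm]
    apply Finset.sum_congr rfl
    intro j _
    rw [Finset.mul_sum]
    exact Finset.sum_congr rfl fun i _ => by ring
  have hsigma_le : ∀ j, ∑ i ∈ S, C j i ≤ 1 := by
    intro j
    calc ∑ i ∈ S, C j i ≤ ∑ i, C j i :=
      Finset.sum_le_sum_of_subset_of_nonneg (Finset.filter_subset _ _) (fun i _ _ => h0 j i)
    _ = 1 := h1 j
  have hsigma_nn : ∀ j, 0 ≤ ∑ i ∈ S, C j i :=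
    fun j => Finset.sum_nonneg fun i _ => h0 j i
  have hsigma_R : ∀ j : Fin n, (j : ℕ) < r → ∑ i ∈ S, C j i = 0 := by
    intro j hj
    exact Finset.sum_eq_zero fun i hi =>
      block_zero h0 h1 hgr j i hj ((hmemS i).mp hi)
  -- monotonicity of s
  have hmono : ∀ t, ∑ i ∈ S, x (t + 1) i ≤ ∑ i ∈ S, x t i := by
    intro t
    rw [hsum_S t]
    have hb : ∑ j, (x t j - (x t j) ^ 2) * (∑ i ∈ S, C j i) ≤
        ∑ j ∈ S, (x t j - (x t j) ^ 2) := by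
      calc ∑ j, (x t j - (x t j) ^ 2) * (∑ i ∈ S, C j i)
          ≤ ∑ j : Fin n, (if r ≤ (j : ℕ) then (x t j - (x t j) ^ 2) else 0) := by
            apply Finset.sum_le_sum
            intro j _
            by_cases hj : r ≤ (j : ℕ)
            · simp only [hj, if_true]
              nlinarith [hy t j, hsigma_le j, hsigma_nn j]
            · simp only [hj, if_false]
              rw [hsigma_R j (by omega), mul_zero]
        _ = ∑ j ∈ S, (x t j - (x t j) ^ 2) := by
            rw [hS_def, Finset.sum_filter]
    have : ∑ j ∈ S, (x t j - (x t j) ^ 2) + ∑ i ∈ S, (x t i) ^ 2 = ∑ j ∈ S, x t j := by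
      rw [← Finset.sum_add_distrib]
      exact Finset.sum_congr rfl fun j _ => by ring
    linarith
  refine ⟨hmono, ?_⟩
  -- positivity propagation
  have hprop : ∀ (k t : ℕ) (j i : Fin n), 0 < (C ^ k) j i → 0 < x t j → 0 < x (t + k) i := by
    intro k
    induction k with
    | zero =>
      intro t j i hpos hxj
      rw [pow_zero, Matrix.one_apply] at hpos
      by_cases hji : j = i
      · rw [← hji]; exact hxj
      · simp [hji] at hpos
    | succ k ih =>
      intro t j i hpos hxj
      have hexp : (C ^ (k + 1)) j i = ∑ m, C j m * (C ^ k) m i := by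
        rw [pow_succ', Matrix.mul_apply]
      rw [hexp] at hpos
      obtain ⟨m, _, hm⟩ := sum_pos_exists h0 h1
        (fun m _ => mul_nonneg (h0 j m) (powNN h0 h1 k m i)) hpos
      have hjm : 0 < C j m := by
        rcases (h0 j m).lt_or_eq with h' | h'
        · exact h'
        · exfalso; rw [← h'] at hm; simp at hm
      have hki : 0 < (C ^ k) m i := by
        rcases (powNN h0 h1 k m i).lt_or_eq with h' | h'
        · exact h'
        · exfalso; rw [← h'] at hm; simp at hm
      have hx1 : 0 < x (t + 1) m := by
        rw [hrec t]; exact DF_pos_step h0 h1 (hsimp t) hjm hxj (hlt1 t j)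
      have hfin := ih (t + 1) m i hki hx1
      have he : t + 1 + k = t + (k + 1) := by omega
      rwa [he] at hfin
  -- node 0 and global reachability
  have hn0 : 0 < n := by omega
  set i0 : Fin n := ⟨0, hn0⟩ with hi0_def
  have hi0r : (i0 : ℕ) < r := by rw [hi0_def]; simp; omega
  have hgr0 : GloballyReachable C i0 := (hgr i0).mpr hi0r
  -- a time at which mass outside S is positive
  obtain ⟨T₁, hT₁⟩ : ∃ T, 0 < ∑ i ∈ Finset.univ.filter (fun i : Fin n => ¬ r ≤ (i : ℕ)), x T i := by
    obtain ⟨j, hj⟩ := exists_pos h0 h1 hx0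
    by_cases hjr : r ≤ (j : ℕ)
    · have hne : j ≠ i0 := by
        intro h
        rw [h] at hjr
        omega
      obtain ⟨k, hk1, hkpos⟩ := hgr0 j hne
      refine ⟨k, ?_⟩
      have hpos : 0 < x k i0 := by
        have := hprop k 0 j i0 hkpos hj
        simpa using this
      have hi0mem : i0 ∈ Finset.univ.filter (fun i : Fin n => ¬ r ≤ (i : ℕ)) := by
        simp only [Finset.mem_filter, Finset.mem_univ, true_and]
        omega
      calc (0:ℝ) < x k i0 := hpos
        _ ≤ ∑ i ∈ Finset.univ.filter (fun i : Fin n => ¬ r ≤ (i : ℕ)), x k i :=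
          Finset.single_le_sum (fun p _ => hxnn k p) hi0mem
    · refine ⟨0, ?_⟩
      have hjmem : j ∈ Finset.univ.filter (fun i : Fin n => ¬ r ≤ (i : ℕ)) := by
        simp only [Finset.mem_filter, Finset.mem_univ, true_and]
        omega
      calc (0:ℝ) < x 0 j := hj
        _ ≤ ∑ i ∈ Finset.univ.filter (fun i : Fin n => ¬ r ≤ (i : ℕ)), x 0 i :=
          Finset.single_le_sum (fun p _ => hxnn 0 p) hjmem
  set q0 : ℝ := ∑ i ∈ Finset.univ.filter (fun i : Fin n => ¬ r ≤ (i : ℕ)), x T₁ i with hq0_def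
  have hsplit : ∀ t, (∑ i ∈ S, x t i) +
      (∑ i ∈ Finset.univ.filter (fun i : Fin n => ¬ r ≤ (i : ℕ)), x t i) = 1 := by
    intro t
    rw [hS_def, Finset.sum_filter_add_sum_filter_not]
    exact (hsimp t).2
  have hq0pos : 0 < q0 := hT₁
  have hq0le : q0 ≤ 1 := by
    have h' := hsplit T₁
    have h'' : 0 ≤ ∑ i ∈ S, x T₁ i := Finset.sum_nonneg fun i _ => hxnn T₁ i
    rw [← hq0_def] at h'
    linarith
  have hs_anti : ∀ a b : ℕ, a ≤ b → ∑ i ∈ S, x b i ≤ ∑ i ∈ S, x a i := by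
    intro a b hab
    induction b, hab using Nat.le_induction with
    | base => exact le_refl _
    | succ b hb ih => exact le_trans (hmono b) ih
  have hsbound : ∀ t, T₁ ≤ t → ∑ i ∈ S, x t i ≤ 1 - q0 := by
    intro t ht
    have h' := hs_anti T₁ t ht
    have h'' := hsplit T₁
    rw [← hq0_def] at h''
    linarith
  -- minimum positive entry, horizon K
  obtain ⟨c, hc_pos, hc_half, hc_min⟩ := exists_c h0 h1
  have hc1 : c ≤ 1 := by linarith
  have hreach : ∀ j : Fin n, r ≤ (j : ℕ) → ∃ k, 1 ≤ k ∧ 0 < (C ^ k) j i0 := by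
    intro j hj
    apply hgr0 j
    intro h
    rw [h] at hj
    omega
  choose! kf hkf1 hkf2 using hreach
  set K : ℕ := max 1 (Finset.univ.sup kf) with hK_def
  have hK1 : 1 ≤ K := le_max_left _ _
  have hKf : ∀ j, kf j ≤ K :=
    fun j => le_trans (Finset.le_sup (Finset.mem_univ j)) (le_max_right _ _)
  have huK : ∀ j : Fin n, r ≤ (j : ℕ) → uu C r K j ≤ 1 - c ^ K := by
    intro j hj
    have h1' : uu C r K j ≤ uu C r (kf j) j := uu_anti h0 h1 hgr (hKf j) j
    have hnotmem : i0 ∉ S := by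
      rw [hmemS]
      omega
    have h2' : uu C r (kf j) j + (C ^ (kf j)) j i0 ≤ 1 := by
      have he : uu C r (kf j) j + (C ^ (kf j)) j i0 =
          ∑ i ∈ insert i0 S, (C ^ (kf j)) j i := by
        rw [Finset.sum_insert hnotmem]
        unfold uu
        rw [hS_def]
        ring
      rw [he]
      calc ∑ i ∈ insert i0 S, (C ^ (kf j)) j i ≤ ∑ i, (C ^ (kf j)) j i :=
          Finset.sum_le_sum_of_subset_of_nonneg (Finset.subset_univ _)
            (fun i _ _ => powNN h0 h1 _ j i)
        _ = 1 := powRS h0 h1 _ j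
    have h3' : c ^ (kf j) ≤ (C ^ (kf j)) j i0 :=
      pow_lower h0 h1 hc_pos.le hc_min (kf j) j i0 (hkf2 j hj)
    have h4' : c ^ K ≤ c ^ (kf j) := pow_le_pow_of_le_one hc_pos.le hc1 (hKf j)
    linarith
  set γ : ℝ := 1 - c ^ K / K with hγ_def
  have hcK_pos : 0 < c ^ K := pow_pos hc_pos K
  have hKR_pos : (0:ℝ) < (K : ℝ) := by
    have : (1:ℝ) ≤ (K:ℝ) := by exact_mod_cast hK1
    linarith
  have hcK_half : c ^ K ≤ 1 / 2 := by
    calc c ^ K ≤ c ^ 1 := pow_le_pow_of_le_one hc_pos.le hc1 hK1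
      _ = c := pow_one c
      _ ≤ 1 / 2 := hc_half
  have hγ_ge : 1 / 2 ≤ γ := by
    have hd : c ^ K / K ≤ c ^ K := by
      apply div_le_self hcK_pos.le
      exact_mod_cast hK1
    rw [hγ_def]
    linarith
  have hγ_lt1 : γ < 1 := by
    have : 0 < c ^ K / K := div_pos hcK_pos hKR_pos
    rw [hγ_def]
    linarith
  have hγ_pos : 0 < γ := lt_of_lt_of_le one_half_pos hγ_ge
  have hγ_le1 : γ ≤ 1 := hγ_lt1.le
  have hBern : 1 - c ^ K ≤ γ ^ K := by
    have ha : (-2 : ℝ) ≤ -(c ^ K / K) := by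
      have : 0 < c ^ K / K := div_pos hcK_pos hKR_pos
      have : c ^ K / K ≤ c ^ K := by
        apply div_le_self hcK_pos.le
        exact_mod_cast hK1
      nlinarith [hcK_half]
    have hb := one_add_mul_le_pow ha K
    have he1 : (1 : ℝ) + -(c ^ K / K) = γ := by rw [hγ_def]; ring
    have he2 : (K : ℝ) * (c ^ K / K) = c ^ K := by field_simp
    rw [he1] at hb
    nlinarith [hb]
  have hKey : ∀ j : Fin n, uu C r K j ≤ γ ^ K * uu C r 0 j := by
    intro j
    by_cases hj : r ≤ (j : ℕ)
    · rw [uu_zero_S h0 h1 hj, mul_one]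
      exact le_trans (huK j hj) hBern
    · rw [uu_zero_R h0 h1 hgr K (by omega), uu_zero_R h0 h1 hgr 0 (by omega), mul_zero]
  -- the weight vector
  set w : Fin n → ℝ := fun j => ∑ k ∈ Finset.range K, γ ^ (K - 1 - k) * uu C r k j with hw_def
  have hw_nn : ∀ j, 0 ≤ w j := fun j => Finset.sum_nonneg fun k _ =>
    mul_nonneg (pow_nonneg hγ_pos.le _) (uu_nonneg h0 h1 k j)
  have hw_ge : ∀ j : Fin n, r ≤ (j : ℕ) → γ ^ (K - 1) ≤ w j := by
    intro j hj
    have h0mem : 0 ∈ Finset.range K := Finset.mem_range.mpr (by omega)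
    have hsl := Finset.single_le_sum (f := fun k => γ ^ (K - 1 - k) * uu C r k j)
      (fun k _ => mul_nonneg (pow_nonneg hγ_pos.le _) (uu_nonneg h0 h1 k j)) h0mem
    rw [hw_def]
    simpa [uu_zero_S h0 h1 hj] using hsl
  have hw_le : ∀ j, w j ≤ (K : ℝ) := by
    intro j
    have hstep : w j ≤ ∑ _k ∈ Finset.range K, (1:ℝ) := by
      apply Finset.sum_le_sum
      intro k _
      have hu1 := uu_le_one (r := r) h0 h1 k j
      have hu0 := uu_nonneg (r := r) h0 h1 k j
      have hp : γ ^ (K - 1 - k) ≤ 1 := pow_le_one₀ hγ_pos.le hγ_le1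
      have hp0 : (0:ℝ) ≤ γ ^ (K - 1 - k) := pow_nonneg hγ_pos.le _
      nlinarith
    simpa using hstep
  have hw_R : ∀ j : Fin n, (j : ℕ) < r → w j = 0 := fun j hj =>
    Finset.sum_eq_zero fun k _ => by rw [uu_zero_R h0 h1 hgr k hj, mul_zero]
  -- master inequality : (Bw)_j ≤ γ w_j
  have hmaster : ∀ j : Fin n, ∑ i ∈ S, C j i * w i ≤ γ * w j := by
    intro j
    have hLHS : ∑ i ∈ S, C j i * w i =
        ∑ k ∈ Finset.range K, γ ^ (K - 1 - k) * uu C r (k + 1) j := by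
      have e1 : ∀ i, C j i * w i =
          ∑ k ∈ Finset.range K, γ ^ (K - 1 - k) * (C j i * uu C r k i) := by
        intro i
        rw [hw_def]
        simp only []
        rw [Finset.mul_sum]
        exact Finset.sum_congr rfl fun k _ => by ring
      rw [Finset.sum_congr rfl fun i _ => e1 i, Finset.sum_comm]
      apply Finset.sum_congr rfl
      intro k _
      rw [← Finset.mul_sum]
      congr 1
      rw [uu_rec h0 h1 hgr k j]
      apply Finset.sum_subset (Finset.subset_univ S)
      intro m _ hm
      have hmr : (m : ℕ) < r := by
        rw [hmemS] at hm
        omega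
      rw [uu_zero_R h0 h1 hgr k hmr, mul_zero]
    have hRHS : γ * w j = ∑ k ∈ Finset.range K, γ ^ (K - k) * uu C r k j := by
      rw [hw_def]
      simp only []
      rw [Finset.mul_sum]
      apply Finset.sum_congr rfl
      intro k hk
      have hk' : k < K := Finset.mem_range.mp hk
      have hKk : K - k = (K - 1 - k) + 1 := by omega
      rw [hKk, pow_succ]
      ring
    set f : ℕ → ℝ := fun m => γ ^ (K - m) * uu C r m j with hf_def
    have hshift : ∑ k ∈ Finset.range K, γ ^ (K - 1 - k) * uu C r (k + 1) j =
        ∑ k ∈ Finset.range K, f (k + 1) := by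
      apply Finset.sum_congr rfl
      intro k hk
      have hk' : k < K := Finset.mem_range.mp hk
      rw [hf_def]
      simp only []
      congr 2
      omega
    have hs1' : ∑ k ∈ Finset.range (K + 1), f k = (∑ k ∈ Finset.range K, f (k + 1)) + f 0 :=
      Finset.sum_range_succ' f K
    have hs2' : ∑ k ∈ Finset.range (K + 1), f k = (∑ k ∈ Finset.range K, f k) + f K :=
      Finset.sum_range_succ f K
    have hfK : f K = uu C r K j := by rw [hf_def]; simp
    have hf0 : f 0 = γ ^ K * uu C r 0 j := by rw [hf_def]; simp
    have hkey := hKey j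
    rw [hLHS, hRHS, hshift]
    linarith
  -- contraction of weighted sum
  set ρ : ℝ := 1 - (1 - γ) * q0 with hρ_def
  have hρ_pos : 0 < ρ := by
    rw [hρ_def]
    nlinarith [hq0le, hq0pos]
  have hρ_lt1 : ρ < 1 := by
    rw [hρ_def]
    nlinarith [hq0pos]
  have hVstep : ∀ t, T₁ ≤ t → ∑ i ∈ S, w i * x (t + 1) i ≤ ρ * ∑ i ∈ S, w i * x t i := by
    intro t ht
    have hexp : ∑ i ∈ S, w i * x (t + 1) i =
        ∑ j' : Fin n, (x t j' - x t j' ^ 2) * (∑ i ∈ S, C j' i * w i) +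
          ∑ i ∈ S, w i * x t i ^ 2 := by
      rw [hrec t]
      simp only [DF]
      rw [show ∀ P Q : Fin n → ℝ, (∑ i ∈ S, w i * (P i + Q i)) =
        ∑ i ∈ S, (w i * P i + w i * Q i) from fun P Q => Finset.sum_congr rfl
          fun i _ => by ring]
      rw [Finset.sum_add_distrib]
      congr 1
      calc ∑ i ∈ S, w i * ∑ j', C j' i * (x t j' - x t j' ^ 2)
          = ∑ i ∈ S, ∑ j' : Fin n, w i * (C j' i * (x t j' - x t j' ^ 2)) := by
            exact Finset.sum_congr rfl fun i _ => by rw [Finset.mul_sum]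
        _ = ∑ j' : Fin n, ∑ i ∈ S, w i * (C j' i * (x t j' - x t j' ^ 2)) := Finset.sum_comm
        _ = ∑ j' : Fin n, (x t j' - x t j' ^ 2) * (∑ i ∈ S, C j' i * w i) := by
            apply Finset.sum_congr rfl
            intro j' _
            rw [Finset.mul_sum]
            exact Finset.sum_congr rfl fun i _ => by ring
    have hb1 : ∑ j' : Fin n, (x t j' - x t j' ^ 2) * (∑ i ∈ S, C j' i * w i) ≤
        ∑ j' : Fin n, (x t j' - x t j' ^ 2) * (γ * w j') :=
      Finset.sum_le_sum fun j' _ => mul_le_mul_of_nonneg_left (hmaster j') (hy t j')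
    have hb2 : ∑ j' : Fin n, (x t j' - x t j' ^ 2) * (γ * w j') =
        ∑ j' ∈ S, (x t j' - x t j' ^ 2) * (γ * w j') := by
      symm
      apply Finset.sum_subset (Finset.subset_univ S)
      intro m _ hm
      have hmr : (m : ℕ) < r := by
        rw [hmemS] at hm
        omega
      rw [hw_R m hmr]
      ring
    have hxle : ∀ j' ∈ S, x t j' ≤ 1 - q0 := by
      intro j' hj'
      calc x t j' ≤ ∑ i ∈ S, x t i := Finset.single_le_sum (fun i _ => hxnn t i) hj'
        _ ≤ 1 - q0 := hsbound t ht
    have hstep2 : ∑ j' ∈ S, (x t j' - x t j' ^ 2) * (γ * w j') + ∑ i ∈ S, w i * x t i ^ 2 =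
        ∑ j' ∈ S, w j' * (γ * x t j' + (1 - γ) * x t j' ^ 2) := by
      rw [← Finset.sum_add_distrib]
      exact Finset.sum_congr rfl fun j' _ => by ring
    have hstep3 : ∑ j' ∈ S, w j' * (γ * x t j' + (1 - γ) * x t j' ^ 2) ≤
        ∑ j' ∈ S, w j' * (γ * x t j' + (1 - γ) * ((1 - q0) * x t j')) := by
      apply Finset.sum_le_sum
      intro j' hj'
      have hx1' := hxle j' hj'
      have hx2' := hxnn t j'
      have hw' := hw_nn j'
      have hsq : x t j' ^ 2 ≤ (1 - q0) * x t j' := by nlinarith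
      have hin : γ * x t j' + (1 - γ) * x t j' ^ 2 ≤
          γ * x t j' + (1 - γ) * ((1 - q0) * x t j') := by nlinarith [hγ_le1]
      exact mul_le_mul_of_nonneg_left hin hw'
    have hstep4 : ∑ j' ∈ S, w j' * (γ * x t j' + (1 - γ) * ((1 - q0) * x t j')) =
        ρ * ∑ j' ∈ S, w j' * x t j' := by
      rw [Finset.mul_sum]
      apply Finset.sum_congr rfl
      intro j' _
      rw [hρ_def]
      ring
    calc ∑ i ∈ S, w i * x (t + 1) i
        = ∑ j' : Fin n, (x t j' - x t j' ^ 2) * (∑ i ∈ S, C j' i * w i) +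
            ∑ i ∈ S, w i * x t i ^ 2 := hexp
      _ ≤ ∑ j' ∈ S, (x t j' - x t j' ^ 2) * (γ * w j') + ∑ i ∈ S, w i * x t i ^ 2 := by
          rw [← hb2]; linarith
      _ = ∑ j' ∈ S, w j' * (γ * x t j' + (1 - γ) * x t j' ^ 2) := hstep2
      _ ≤ ∑ j' ∈ S, w j' * (γ * x t j' + (1 - γ) * ((1 - q0) * x t j')) := hstep3
      _ = ρ * ∑ j' ∈ S, w j' * x t j' := hstep4
  have hVgeo : ∀ t, T₁ ≤ t →
      ∑ i ∈ S, w i * x t i ≤ ρ ^ (t - T₁) * ∑ i ∈ S, w i * x T₁ i := by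
    intro t ht
    induction t, ht using Nat.le_induction with
    | base => simp
    | succ t ht ih =>
      have h1' := hVstep t ht
      have h2' : t + 1 - T₁ = (t - T₁) + 1 := by omega
      rw [h2', pow_succ]
      calc ∑ i ∈ S, w i * x (t + 1) i ≤ ρ * ∑ i ∈ S, w i * x t i := h1'
        _ ≤ ρ * (ρ ^ (t - T₁) * ∑ i ∈ S, w i * x T₁ i) :=
            mul_le_mul_of_nonneg_left ih hρ_pos.le
        _ = ρ ^ (t - T₁) * ρ * ∑ i ∈ S, w i * x T₁ i := by ring
  have hsle1 : ∀ t, ∑ i ∈ S, x t i ≤ 1 := by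
    intro t
    calc ∑ i ∈ S, x t i ≤ ∑ i, x t i :=
        Finset.sum_le_sum_of_subset_of_nonneg (Finset.subset_univ _) (fun i _ _ => hxnn t i)
      _ = 1 := (hsimp t).2
  have hVT1 : ∑ i ∈ S, w i * x T₁ i ≤ (K : ℝ) := by
    calc ∑ i ∈ S, w i * x T₁ i ≤ ∑ i ∈ S, (K : ℝ) * x T₁ i :=
        Finset.sum_le_sum fun i _ => mul_le_mul_of_nonneg_right (hw_le i) (hxnn T₁ i)
      _ = (K : ℝ) * ∑ i ∈ S, x T₁ i := by rw [Finset.mul_sum]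
      _ ≤ (K : ℝ) * 1 := mul_le_mul_of_nonneg_left (hsle1 T₁) hKR_pos.le
      _ = (K : ℝ) := mul_one _
  have hγpow_pos : (0:ℝ) < γ ^ (K - 1) := pow_pos hγ_pos _
  have hγpow_le1 : γ ^ (K - 1) ≤ 1 := pow_le_one₀ hγ_pos.le hγ_le1
  have hsV : ∀ t, γ ^ (K - 1) * ∑ i ∈ S, x t i ≤ ∑ i ∈ S, w i * x t i := by
    intro t
    rw [Finset.mul_sum]
    exact Finset.sum_le_sum fun i hi =>
      mul_le_mul_of_nonneg_right (hw_ge i ((hmemS i).mp hi)) (hxnn t i)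
  have hρT_pos : (0:ℝ) < ρ ^ T₁ := pow_pos hρ_pos _
  refine ⟨((K : ℝ) + 1) / (γ ^ (K - 1) * ρ ^ T₁), by positivity, ρ, ⟨hρ_pos, hρ_lt1⟩, ?_⟩
  intro t
  by_cases ht : T₁ ≤ t
  · have h1' := hVgeo t ht
    have h2' := hsV t
    have hρt_pos : (0:ℝ) < ρ ^ (t - T₁) := pow_pos hρ_pos _
    have hchain : γ ^ (K - 1) * ∑ i ∈ S, x t i ≤ ρ ^ (t - T₁) * (K : ℝ) :=
      le_trans h2' (le_trans h1' (mul_le_mul_of_nonneg_left hVT1 hρt_pos.le))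
    have h3' : ρ ^ t = ρ ^ T₁ * ρ ^ (t - T₁) := by
      rw [← pow_add]
      congr 1
      omega
    have hM : ((K : ℝ) + 1) / (γ ^ (K - 1) * ρ ^ T₁) * ρ ^ t =
        ((K : ℝ) + 1) * ρ ^ (t - T₁) / γ ^ (K - 1) := by
      rw [h3']
      field_simp
    rw [hM, le_div_iff₀ hγpow_pos]
    nlinarith [hchain, hρt_pos]
  · push_neg at ht
    have hs1' := hsle1 t
    have hρtT : ρ ^ T₁ ≤ ρ ^ t := pow_le_pow_of_le_one hρ_pos.le hρ_lt1.le (by omega)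
    have hMpos : 0 < ((K : ℝ) + 1) / (γ ^ (K - 1) * ρ ^ T₁) := by positivity
    have hM1 : ((K : ℝ) + 1) / (γ ^ (K - 1) * ρ ^ T₁) * ρ ^ T₁ = ((K : ℝ) + 1) / γ ^ (K - 1) := by
      field_simp
    have hge1 : (1:ℝ) ≤ ((K : ℝ) + 1) / γ ^ (K - 1) := by
      rw [le_div_iff₀ hγpow_pos]
      nlinarith [hKR_pos]
    calc ∑ i ∈ S, x t i ≤ 1 := hs1'
      _ ≤ ((K : ℝ) + 1) / γ ^ (K - 1) := hge1
      _ = ((K : ℝ) + 1) / (γ ^ (K - 1) * ρ ^ T₁) * ρ ^ T₁ := hM1.symm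
      _ ≤ ((K : ℝ) + 1) / (γ ^ (K - 1) * ρ ^ T₁) * ρ ^ t :=
          mul_le_mul_of_nonneg_left hρtT hMpos.le
end
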